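/- Let (Ω, F, P) be a probability space, m ≥ 2, let μ₀ ∈ ℝ^m lie in the probability simplex Δ_m with every entry strictly positive, and let c ∈ ℝ^m satisfy c_1 > c_2 ≥ … ≥ c_m; set D_2 = c_1 - c_2 > 0. Let Φ_t(j) : Ω → ℝ (t ≥ 1, j ∈ {1,…,m}) be random variables and suppose there is a constant C > 0 such that for every j, every ε > 0, and every t ≥ 1, P(|Φ_t(j) - c_j| ≥ ε) ≤ C/(ε²·t). Define the random Gibbs beliefs μ_t(j) = μ₀_j · exp(t·Φ_t(j)) / (Σ_{j'} μ₀_{j'} · exp(t·Φ_t(j'))). Then for every ε > 0 and every t ≥ 1, with probability at least 1 - m·C/(ε²·t), it holds that |μ_t(1) - 1| ≤ (m-1) · (max_{1≤k≤m} μ₀_k / μ₀_1) · exp((-D_2 + 2ε)·t). -/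

import Mathlib

/-! Off the event that some `Φ_t(j)` is `ε`-far from `c_j`, every exponent `t Φ_t(j)` with `j ≠ 1`
trails `t Φ_t(1)` by at least `(D_2 - 2ε) t`, so each competing Gibbs weight is at most
`(max_k μ₀_k / μ₀_1) exp((-D_2 + 2ε) t)` times the weight of the true state; the `m - 1` of
them bound `1 - μ_t(1)`. By the union bound the bad event has probability at most `m C / (ε² t)`. -/

open Finset MeasureTheory ProbabilityTheory

theorem abs_div_sum_sub_one_le {ι : Type*} [Fintype ι] [DecidableEq ι] {f : ι → ℝ}
    (hf : ∀ j, 0 ≤ f j) {i : ι} (hi : 0 < f i) :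
    |f i / ∑ j, f j - 1| ≤ ∑ j ∈ univ.erase i, f j / f i := by
  have hsplit : ∑ j, f j = f i + ∑ j ∈ univ.erase i, f j :=
    (add_sum_erase _ f (mem_univ i)).symm
  have hrest : 0 ≤ ∑ j ∈ univ.erase i, f j := sum_nonneg fun j _ => hf j
  have hsum : 0 < ∑ j, f j := by linarith
  calc |f i / ∑ j, f j - 1| = (∑ j ∈ univ.erase i, f j) / ∑ j, f j := by
        rw [abs_sub_comm, abs_of_nonneg (by rw [sub_nonneg, div_le_one hsum]; linarith),
          eq_div_iff hsum.ne', sub_mul, div_mul_cancel₀ _ hsum.ne']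
        linarith
    _ ≤ (∑ j ∈ univ.erase i, f j) / f i := div_le_div_of_nonneg_left hrest hi (by linarith)
    _ = ∑ j ∈ univ.erase i, f j / f i := sum_div _ _ _

theorem abs_gibbs_sub_one_le {ι : Type*} [Fintype ι] [DecidableEq ι] {w x : ι → ℝ}
    (hw : ∀ j, 0 < w j) {i : ι} {B δ : ℝ} (hB : ∀ j, w j ≤ B)
    (hx : ∀ j ≠ i, x j - x i ≤ δ) :
    |w i * Real.exp (x i) / ∑ j, w j * Real.exp (x j) - 1| ≤
      (Fintype.card ι - 1 : ℝ) * (B / w i) * Real.exp δ := by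
  have hratio : ∀ j ∈ univ.erase i,
      w j * Real.exp (x j) / (w i * Real.exp (x i)) ≤ B / w i * Real.exp δ := by
    intro j hj
    rw [mul_div_mul_comm, ← Real.exp_sub]
    exact mul_le_mul (div_le_div_of_nonneg_right (hB j) (hw i).le)
      (Real.exp_le_exp.mpr (hx j (ne_of_mem_erase hj))) (Real.exp_nonneg _)
      (div_nonneg ((hw i).le.trans (hB i)) (hw i).le)
  calc _ ≤ ∑ j ∈ univ.erase i, w j * Real.exp (x j) / (w i * Real.exp (x i)) :=
        abs_div_sum_sub_one_le (fun j => (mul_pos (hw j) (Real.exp_pos _)).le)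
          (mul_pos (hw i) (Real.exp_pos _))
    _ ≤ (univ.erase i).card • (B / w i * Real.exp δ) := sum_le_card_nsmul _ _ _ hratio
    _ = _ := by
        rw [card_erase_of_mem (mem_univ i), card_univ, nsmul_eq_mul,
          Nat.cast_sub (Fintype.card_pos_iff.mpr ⟨i⟩), Nat.cast_one, mul_assoc]

theorem mul_sub_mul_le_of_abs_sub_lt {a b a₀ b₀ ε t : ℝ} (ht : 0 ≤ t)
    (ha : |a - a₀| < ε) (hb : |b - b₀| < ε) :
    t * a - t * b ≤ (a₀ - b₀ + 2 * ε) * t := by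
  rw [← mul_sub, mul_comm]
  have := abs_lt.mp ha
  have := abs_lt.mp hb
  gcongr
  linarith

theorem one_sub_sum_measure_le_of_compl_iUnion_subset {Ω ι : Type*} [MeasurableSpace Ω]
    {P : Measure Ω} [IsProbabilityMeasure P] [Fintype ι] (A : ι → Set Ω) {S : Set Ω}
    (hS : (⋃ j, A j)ᶜ ⊆ S) :
    1 - ∑ j, P (A j) ≤ P S := by
  rw [tsub_le_iff_left, ← measure_univ (μ := P), ← Set.union_compl_self (⋃ j, A j)]
  calc P ((⋃ j, A j) ∪ (⋃ j, A j)ᶜ) ≤ P (⋃ j, A j) + P (⋃ j, A j)ᶜ := measure_union_le _ _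
    _ ≤ ∑ j, P (A j) + P S := add_le_add (measure_iUnion_fintype_le _ _) (measure_mono hS)

/-- Suppose `c_1 > c_2 ≥ … ≥ c_m`, `D_2 = c_1 - c_2 > 0`, and the random
exponents satisfy the Chebyshev-type bound `P(|Φ_t(j) - c_j| ≥ ε) ≤ C/(ε² t)`. Then the
random Gibbs beliefs `μ_t(j) = μ₀_j exp(t Φ_t(j)) / ∑_{j'} μ₀_{j'} exp(t Φ_t(j'))`
satisfy, for every `ε > 0` and `t ≥ 1`, with probability at least `1 - m C/(ε² t)`,
`|μ_t(1) - 1| ≤ (m-1) (max_k μ₀_k / μ₀_1) exp((-D_2 + 2ε) t)`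
(state `j` is represented by the index `⟨j-1, _⟩ : Fin m`). -/
theorem gibbs_learning_rate_high_probability
    {Ω : Type*} [MeasureSpace Ω] [IsProbabilityMeasure (ℙ : Measure Ω)]
    (m : ℕ) (hm : 2 ≤ m) (μ0 : Fin m → ℝ)
    (hμ0pos : ∀ j, 0 < μ0 j)
    (c : Fin m → ℝ)
    (hcmono : ∀ j j' : Fin m, j ≠ ⟨0, by omega⟩ → j ≤ j' → c j' ≤ c j)
    (D2 : ℝ) (hD2 : D2 = c ⟨0, by omega⟩ - c ⟨1, by omega⟩)
    (Φ : ℕ → Fin m → Ω → ℝ)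
    (C : ℝ)
    (hcheb : ∀ (j : Fin m) (ε : ℝ), 0 < ε → ∀ t : ℕ, 1 ≤ t →
      ℙ {ω | ε ≤ |Φ t j ω - c j|} ≤ ENNReal.ofReal (C / (ε ^ 2 * t)))
    (μ : ℕ → Fin m → Ω → ℝ)
    (hμ : ∀ t j ω, μ t j ω = μ0 j * Real.exp ((t : ℝ) * Φ t j ω) /
      ∑ j', μ0 j' * Real.exp ((t : ℝ) * Φ t j' ω)) :
    ∀ (ε : ℝ), 0 < ε → ∀ t : ℕ, 1 ≤ t →
      1 - ENNReal.ofReal ((m : ℝ) * C / (ε ^ 2 * t)) ≤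
        ℙ {ω | |μ t ⟨0, by omega⟩ ω - 1| ≤
          ((m : ℝ) - 1) *
            ((Finset.univ.sup' (Finset.univ_nonempty_iff.mpr ⟨⟨0, by omega⟩⟩) μ0) /
              μ0 ⟨0, by omega⟩) *
            Real.exp ((-D2 + 2 * ε) * (t : ℝ))} := by
  intro ε hε t ht
  have hbad : ∑ j, ℙ {ω | ε ≤ |Φ t j ω - c j|} ≤ ENNReal.ofReal (m * C / (ε ^ 2 * t)) := by
    calc _ ≤ ∑ _j : Fin m, ENNReal.ofReal (C / (ε ^ 2 * t)) :=
          sum_le_sum fun j _ => hcheb j ε hε t ht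
      _ = _ := by
          rw [sum_const, card_univ, Fintype.card_fin, nsmul_eq_mul, mul_div_assoc,
            ENNReal.ofReal_mul (Nat.cast_nonneg m), ENNReal.ofReal_natCast]
  refine (tsub_le_tsub_left hbad 1).trans (one_sub_sum_measure_le_of_compl_iUnion_subset _ ?_)
  intro ω hω
  simp only [Set.compl_iUnion, Set.mem_iInter, Set.mem_compl_iff, Set.mem_ofPred_eq,
    not_le] at hω
  have hgap : ∀ j ≠ (⟨0, by omega⟩ : Fin m),
      t * Φ t j ω - t * Φ t ⟨0, by omega⟩ ω ≤ (-D2 + 2 * ε) * t := by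
    intro j hj
    have hcj : c j ≤ c ⟨1, by omega⟩ :=
      hcmono _ j (by simp [Fin.ext_iff]) (by simp [Fin.le_def, Fin.ext_iff] at hj ⊢; omega)
    refine (mul_sub_mul_le_of_abs_sub_lt t.cast_nonneg (hω j) (hω _)).trans ?_
    gcongr
    linarith
  simpa only [Set.mem_ofPred_eq, hμ, Fintype.card_fin] using
    abs_gibbs_sub_one_le hμ0pos (fun j => le_sup' μ0 (mem_univ j)) hgap
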